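/- arXiv:1605.08098 — 2 statements merged into one kernel-verified Lean document; each statement's English description precedes it below -/
import Mathlib

section
/- Let M be a minor-closed class of binary matroids, and let {Φ₁,…,Φ_s,Ψ₁,…,Ψ_t} be a set of binary frame templates describing M. If any of these templates is nontrivial, then M contains M(Φ_{Y₀}), M(Φ_{Y₁}), M*(Φ_{Y₀}), or M*(Φ_{Y₁}), where M(Φ) is the class of matroids conforming to Φ and M*(Φ) is the class of duals of matroids conforming to Φ. -/
/-!
A nontrivial template `Φ` of the description satisfies `Φ' ⪯ Φ` for one of `Φ_X`, `Φ_C`,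
`Φ_{CX}`, `Φ_{Y₀}`, `Φ_{Y₁}`, and `𝓜` contains `𝓜_w(Φ)` (or its duals). So it suffices that
`𝓜(Φ_{Y₀}) ⊆ 𝓜_w(Φ_C) ∩ 𝓜_w(Φ_{CX})` and `𝓜(Φ_{Y₁}) ⊆ 𝓜_w(Φ_X)`.

A matroid conforming to `Φ_{Y₀}` is represented by a binary frame matrix plus one free
column `y`. Add a new row with ones in column `y` and in a new unit column `f`: contracting `y`
gives back the matroid, with `f` in place of `y`. Now `y` is a `C`-element with an arbitrary
column, and the new row can serve as the `X`-row of `Φ_{CX}`.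

For `Φ_{Y₁}` both `Δ` and `Λ` are trivial: off the two `X`-rows every `Z`-column of `A` is a
unit column, and every other column outside `Y₁` is a frame column vanishing on `X`. Moving one
`X`-row into the frame part therefore keeps these columns frame columns (over `GF(2)` a second
entry `1` equals `-1`), and deleting `Y₁` leaves a matrix virtually respecting `Φ_X`.
-/

open Matroid Set

namespace TemplatePaper

variable {α β γ : Type*}

/-- Matroid isomorphism. -/
def MIso (M : Matroid α) (N : Matroid β) : Prop :=
  ∃ f : α → β, Set.BijOn f M.E N.E ∧ ∀ I ⊆ M.E, (M.Indep I ↔ N.Indep (f '' I))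

/-- `N` is the contraction `M ／ K`. -/
def IsContraction (N M : Matroid α) (K : Set α) : Prop :=
  N.E = M.E \ K ∧
    ∀ I : Set α, N.Indep I ↔
      (I ⊆ M.E \ K ∧ ∃ J, M.IsBasis J (K ∩ M.E) ∧ M.Indep (I ∪ J))

/-- `N` is a minor of `M` (obtained by a contraction followed by a deletion). -/
def MinorOf (N M : Matroid α) : Prop :=
  ∃ (N₁ : Matroid α) (K D : Set α), IsContraction N₁ M K ∧ N = N₁ ↾ (N₁.E \ D)

/-- `M` has a minor isomorphic to `P`. -/
def HasIsoMinor (M : Matroid α) (P : Matroid β) : Prop :=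
  ∃ N : Matroid α, MinorOf N M ∧ MIso P N

/-- A simple matroid: every subset of the ground set with at most two elements
is independent. -/
def IsSimple (M : Matroid α) : Prop :=
  ∀ I ⊆ M.E, I.ncard ≤ 2 → M.Indep I

/-- The rank of a set in a matroid (as a natural number; intended for finite matroids). -/
noncomputable def rkOf (M : Matroid α) (X : Set α) : ℕ :=
  sSup {n | ∃ I, I ⊆ X ∧ M.Indep I ∧ I.ncard = n}

/-- The rank of a matroid. -/
noncomputable def rk (M : Matroid α) : ℕ := rkOf M M.E

/-- A matroid is vertically `k`-connected if for every partition `(X, Y)` of the ground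
set with `r(X) + r(Y) - r(M) < k - 1`, either `X` or `Y` is spanning. -/
def VertConn (M : Matroid α) (k : ℕ) : Prop :=
  ∀ X Y : Set α, X ∪ Y = M.E → Disjoint X Y →
    (rkOf M X : ℤ) + (rkOf M Y : ℤ) - (rk M : ℤ) < (k : ℤ) - 1 →
    M.Spanning X ∨ M.Spanning Y

/-- `M` is represented (on its ground set) by the matrix `A` over `F`:
independence in `M` coincides with linear independence of the corresponding columns. -/
def IsRepBy (F : Type*) [Field F] (M : Matroid α) (A : β → α → F) : Prop :=
  ∀ I ⊆ M.E, (M.Indep I ↔ LinearIndependent F (fun e : I => fun b => A b (e : α)))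

/-- A binary matroid: a matroid representable over `GF(2)`. -/
def IsBinary (M : Matroid α) : Prop :=
  ∃ (m : ℕ) (A : Fin m → α → ZMod 2), IsRepBy (ZMod 2) M A

/-- A graphic matroid: the cycle matroid of a graph.  Equivalently (as is standard for
binary matroids, and as used in the paper), a matroid representable over `GF(2)` by a
matrix in which every column has at most two nonzero entries. -/
def IsGraphic (M : Matroid α) : Prop :=
  ∃ (m : ℕ) (A : Fin m → α → ZMod 2),
    IsRepBy (ZMod 2) M A ∧ ∀ e ∈ M.E, {i | A i e ≠ 0}.ncard ≤ 2

/-- A cographic matroid: the dual of a graphic matroid. -/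
def IsCographic (M : Matroid α) : Prop := IsGraphic M✶

/-- `G` is (isomorphic to) the binary projective geometry `PG(m-1, 2)`:
its ground set is in bijection with the nonzero vectors of `GF(2)^m`, with independence
given by linear independence. -/
def IsPG (m : ℕ) (G : Matroid γ) : Prop :=
  ∃ f : γ → (Fin m → ZMod 2),
    Set.BijOn f G.E {v | v ≠ 0} ∧
    ∀ I ⊆ G.E, (G.Indep I ↔ LinearIndependent (ZMod 2) (fun e : I => f (e : γ)))

/-- The set of sizes of simple rank-`≤ r` matroids in a class `𝓜`; the growth rate
function of `𝓜` at `r` is the greatest element of this set. -/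
def sizesOfRank (𝓜 : Set (Matroid ℕ)) (r : ℕ) : Set ℕ :=
  {n | ∃ M ∈ 𝓜, M.E.Finite ∧ IsSimple M ∧ rk M ≤ r ∧ M.E.ncard = n}

/-- The growth rate function of `𝓜` agrees with `f` for all but finitely many `r`. -/
def GrowthRateEventually (𝓜 : Set (Matroid ℕ)) (f : ℕ → ℕ) : Prop :=
  ∃ N : ℕ, ∀ r ≥ N, IsGreatest (sizesOfRank 𝓜 r) (f r)

/-- A minor-closed class of matroids (closed under minors and isomorphism). -/
def MinorClosed (𝓜 : Set (Matroid ℕ)) : Prop :=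
  (∀ M ∈ 𝓜, ∀ N : Matroid ℕ, MinorOf N M → N ∈ 𝓜) ∧
  (∀ M ∈ 𝓜, ∀ N : Matroid ℕ, MIso N M → N ∈ 𝓜)

/-- The class of binary matroids with no minor isomorphic to `P`. -/
def EX (P : Matroid β) : Set (Matroid ℕ) :=
  {M | M.E.Finite ∧ IsBinary M ∧ ¬HasIsoMinor M P}

/-- The subgroup of `F^ℕ` of all vectors supported on the finite set `S`
(used to encode subgroups of `F^S` for varying index sets `S`). -/
def fullOn (F : Type*) [Field F] (S : Finset ℕ) : AddSubgroup (ℕ → F) where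
  carrier := {v | ∀ i ∉ S, v i = 0}
  add_mem' := by
    intro a b ha hb i hi
    simp [Pi.add_apply, ha i hi, hb i hi]
  zero_mem' := by intro i _; rfl
  neg_mem' := by
    intro a ha i hi
    simp [Pi.neg_apply, ha i hi]

/-- Restriction of a vector to the coordinates in `S` (zero elsewhere); used to encode
the projection of a subgroup of `F^T` into `F^S`. -/
def maskOn {F : Type*} [Field F] (S : Finset ℕ) (v : ℕ → F) : ℕ → F :=
  fun i => if i ∈ S then v i else 0

/-- A frame template over `F`.  The disjoint finite sets `C, X, Y₀, Y₁` are encoded as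
disjoint finite subsets of `ℕ`; the matrix `A₁ ∈ F^{X × (C ∪ Y₀ ∪ Y₁)}` is encoded as a
function `ℕ → ℕ → F` supported on `X × (C ∪ Y₀ ∪ Y₁)`; the subgroups
`Λ ≤ F^X` and `Δ ≤ F^{C ∪ Y₀ ∪ Y₁}` are encoded as subgroups of `F^ℕ` of vectors
supported on the relevant sets, closed under scaling by elements of `Γ`. -/
structure FrameTemplate (F : Type) [Field F] where
  Γ : Subgroup Fˣ
  C : Finset ℕ
  X : Finset ℕ
  Y0 : Finset ℕ
  Y1 : Finset ℕ
  disj : List.Pairwise Disjoint [C, X, Y0, Y1]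
  A1 : ℕ → ℕ → F
  A1_supp : ∀ i j, A1 i j ≠ 0 → i ∈ X ∧ j ∈ C ∪ Y0 ∪ Y1
  Δ : AddSubgroup (ℕ → F)
  Δ_supp : ∀ v ∈ Δ, ∀ j ∉ C ∪ Y0 ∪ Y1, v j = 0
  Δ_smul : ∀ γ ∈ Γ, ∀ v ∈ Δ, (γ : F) • v ∈ Δ
  Λ : AddSubgroup (ℕ → F)
  Λ_supp : ∀ v ∈ Λ, ∀ i ∉ X, v i = 0
  Λ_smul : ∀ γ ∈ Γ, ∀ v ∈ Λ, (γ : F) • v ∈ Λ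

namespace FrameTemplate

variable {F : Type} [Field F]

/-- The column index set `C ∪ Y₀ ∪ Y₁` of `A₁`. -/
def CY (Φ : FrameTemplate F) : Finset ℕ := Φ.C ∪ Φ.Y0 ∪ Φ.Y1

end FrameTemplate

section Columns

variable {F : Type} [Field F]

/-- A column that is zero on the rows in `S`. -/
def IsZeroColOn (S : Set ℕ) (v : ℕ → F) : Prop := ∀ b ∈ S, v b = 0

/-- A unit column on the rows in `S`. -/
def IsUnitColOn (S : Set ℕ) (v : ℕ → F) : Prop :=
  ∃ b ∈ S, v b = 1 ∧ ∀ b' ∈ S, b' ≠ b → v b' = 0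

/-- A column of a `Γ`-frame matrix (restricted to the rows in `S`): at most two nonzero
entries, a nonzero column contains a `1`, and a second nonzero entry equals `-γ` for
some `γ ∈ Γ`. -/
def IsFrameColOn (Γ : Subgroup Fˣ) (S : Set ℕ) (v : ℕ → F) : Prop :=
  IsZeroColOn S v ∨ IsUnitColOn S v ∨
    ∃ b₁ ∈ S, ∃ b₂ ∈ S, b₁ ≠ b₂ ∧ v b₁ = 1 ∧ (∃ γ ∈ Γ, v b₂ = -(γ : F)) ∧
      ∀ b ∈ S, b ≠ b₁ → b ≠ b₂ → v b = 0

end Columns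

namespace FrameTemplate

variable {F : Type} [Field F]

/-- A matrix `A'` (with row set `B` and column set `E`, encoded as a function `ℕ → ℕ → F`
supported on `B × E`) respects the template `Φ`, with `Z ⊆ E` as the distinguished set of
columns, and with the columns of `A'[B - X, Z]` required to satisfy `zcol`.
Taking `zcol` to be "unit column" gives `Respects`; allowing zero columns as well gives
`VRespects` (virtually respects). -/
def RespectsWith (zcol : Set ℕ → (ℕ → F) → Prop) (Φ : FrameTemplate F)
    (B E Z : Finset ℕ) (A' : ℕ → ℕ → F) : Prop :=
  Φ.X ⊆ B ∧ Φ.CY ⊆ E ∧ Z ⊆ E ∧ Disjoint Z Φ.CY ∧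
  (∀ i j, A' i j ≠ 0 → i ∈ B ∧ j ∈ E) ∧
  (∀ i ∈ Φ.X, ∀ j ∈ Φ.CY, A' i j = Φ.A1 i j) ∧
  (∀ i ∈ Φ.X, ∀ j ∈ Z, A' i j = 0) ∧
  (∀ j ∈ Z, zcol (↑B \ ↑Φ.X : Set ℕ) (fun i => A' i j)) ∧
  (∀ j ∈ E, j ∉ Φ.CY → j ∉ Z →
    IsFrameColOn Φ.Γ (↑B \ ↑Φ.X : Set ℕ) (fun i => A' i j)) ∧
  (∀ j ∈ E, j ∉ Φ.CY → j ∉ Z → maskOn Φ.X (fun i => A' i j) ∈ Φ.Λ) ∧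
  (∀ i ∈ B, i ∉ Φ.X → maskOn Φ.CY (fun j => A' i j) ∈ Φ.Δ)

/-- `A'` respects `Φ`. -/
def Respects (Φ : FrameTemplate F) (B E Z : Finset ℕ) (A' : ℕ → ℕ → F) : Prop :=
  RespectsWith (fun S v => IsUnitColOn S v) Φ B E Z A'

/-- `A'` virtually respects `Φ` (columns of `A'[B - X, Z]` may be unit or zero). -/
def VRespects (Φ : FrameTemplate F) (B E Z : Finset ℕ) (A' : ℕ → ℕ → F) : Prop :=
  RespectsWith (fun S v => IsZeroColOn S v ∨ IsUnitColOn S v) Φ B E Z A'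

/-- `A` is constructed from `A'`: they agree outside the `Z`-columns, and each
`Z`-column of `A` is the corresponding column of `A'` plus some `Y₁`-column of `A'`. -/
def BuiltFrom (Φ : FrameTemplate F) (Z : Finset ℕ) (A' A : ℕ → ℕ → F) : Prop :=
  (∀ j ∉ Z, ∀ i, A i j = A' i j) ∧
  (∀ j ∈ Z, ∃ y ∈ Φ.Y1, ∀ i, A i j = A' i j + A' i y)

end FrameTemplate

/-- `N` is the column (vector) matroid of the matrix `A` (rows indexed by `β`),
with ground set `E`. -/
def IsColMatroidOf {β : Type*} {F : Type} [Field F] (N : Matroid ℕ) (E : Finset ℕ)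
    (A : β → ℕ → F) : Prop :=
  N.E = ↑E ∧ ∀ I : Set ℕ,
    (N.Indep I ↔ I ⊆ ↑E ∧ LinearIndependent F (fun e : I => fun i => A i (e : ℕ)))

namespace FrameTemplate

variable {F : Type} [Field F]

/-- `M` conforms to `Φ` (with the respecting condition given by `resp`): `M` is isomorphic
to `M(A) ／ C ＼ Y₁` for a matrix `A` built from a matrix `A'` satisfying `resp`. -/
def ConformsWith (resp : FrameTemplate F → Finset ℕ → Finset ℕ → Finset ℕ →
      (ℕ → ℕ → F) → Prop) (M : Matroid α) (Φ : FrameTemplate F) : Prop :=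
  ∃ (B E Z : Finset ℕ) (A' A : ℕ → ℕ → F) (N N₁ : Matroid ℕ),
    resp Φ B E Z A' ∧ Φ.BuiltFrom Z A' A ∧ IsColMatroidOf N E A ∧
    IsContraction N₁ N ↑Φ.C ∧ MIso M (N₁ ↾ (N₁.E \ ↑Φ.Y1))

/-- `M` conforms to `Φ`. -/
def Conforms (M : Matroid α) (Φ : FrameTemplate F) : Prop :=
  ConformsWith (fun Φ B E Z A' => Φ.Respects B E Z A') M Φ

/-- `M` virtually conforms to `Φ`. -/
def VConforms (M : Matroid α) (Φ : FrameTemplate F) : Prop :=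
  ConformsWith (fun Φ B E Z A' => Φ.VRespects B E Z A') M Φ

end FrameTemplate

namespace FrameTemplate

variable {F : Type} [Field F]

/-- Operation (1): replace `Γ` with a proper subgroup. -/
def Op1 (Φ Φ' : FrameTemplate F) : Prop :=
  Φ'.Γ < Φ.Γ ∧ Φ'.C = Φ.C ∧ Φ'.X = Φ.X ∧ Φ'.Y0 = Φ.Y0 ∧ Φ'.Y1 = Φ.Y1 ∧
    Φ'.A1 = Φ.A1 ∧ Φ'.Δ = Φ.Δ ∧ Φ'.Λ = Φ.Λ

/-- Operation (2): replace `Λ` with a proper subgroup (closed under scaling by `Γ`). -/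
def Op2 (Φ Φ' : FrameTemplate F) : Prop :=
  Φ'.Γ = Φ.Γ ∧ Φ'.C = Φ.C ∧ Φ'.X = Φ.X ∧ Φ'.Y0 = Φ.Y0 ∧ Φ'.Y1 = Φ.Y1 ∧
    Φ'.A1 = Φ.A1 ∧ Φ'.Δ = Φ.Δ ∧ Φ'.Λ < Φ.Λ

/-- Operation (3): replace `Δ` with a proper subgroup (closed under scaling by `Γ`). -/
def Op3 (Φ Φ' : FrameTemplate F) : Prop :=
  Φ'.Γ = Φ.Γ ∧ Φ'.C = Φ.C ∧ Φ'.X = Φ.X ∧ Φ'.Y0 = Φ.Y0 ∧ Φ'.Y1 = Φ.Y1 ∧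
    Φ'.A1 = Φ.A1 ∧ Φ'.Δ < Φ.Δ ∧ Φ'.Λ = Φ.Λ

/-- Operation (4): remove an element `y` from `Y₁`. -/
def Op4 (Φ Φ' : FrameTemplate F) : Prop :=
  ∃ y ∈ Φ.Y1, Φ'.Γ = Φ.Γ ∧ Φ'.C = Φ.C ∧ Φ'.X = Φ.X ∧ Φ'.Y0 = Φ.Y0 ∧
    Φ'.Y1 = Φ.Y1.erase y ∧
    Φ'.A1 = (fun i j => if j = y then 0 else Φ.A1 i j) ∧
    (Φ'.Δ : Set (ℕ → F)) = maskOn Φ'.CY '' ↑Φ.Δ ∧ Φ'.Λ = Φ.Λ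

/-- An elementary row operation on the rows indexed by `X`. -/
def ElemRowOp (X : Finset ℕ) (e : (ℕ → F) → (ℕ → F)) : Prop :=
  (∃ x₁ ∈ X, ∃ x₂ ∈ X, x₁ ≠ x₂ ∧ e = fun v => v ∘ Equiv.swap x₁ x₂) ∨
  (∃ x ∈ X, ∃ c : F, c ≠ 0 ∧ e = fun v i => if i = x then c * v i else v i) ∨
  (∃ x₁ ∈ X, ∃ x₂ ∈ X, x₁ ≠ x₂ ∧
    ∃ c : F, e = fun v i => if i = x₂ then v i + c * v x₁ else v i)

/-- Operation (5): perform an elementary row operation on the `X`-rows of every matrix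
respecting `Φ`; this alters `A₁` and performs a change of basis on `Λ`. -/
def Op5 (Φ Φ' : FrameTemplate F) : Prop :=
  ∃ e, ElemRowOp Φ.X e ∧
    Φ'.Γ = Φ.Γ ∧ Φ'.C = Φ.C ∧ Φ'.X = Φ.X ∧ Φ'.Y0 = Φ.Y0 ∧ Φ'.Y1 = Φ.Y1 ∧
    Φ'.A1 = (fun i j => e (fun i' => Φ.A1 i' j) i) ∧
    Φ'.Δ = Φ.Δ ∧ (Φ'.Λ : Set (ℕ → F)) = e '' ↑Φ.Λ

/-- Operation (6): remove an element `x ∈ X` whose row is zero in every matrix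
respecting `Φ`. -/
def Op6 (Φ Φ' : FrameTemplate F) : Prop :=
  ∃ x ∈ Φ.X, (∀ B E Z A', Φ.Respects B E Z A' → ∀ j, A' x j = 0) ∧
    Φ'.Γ = Φ.Γ ∧ Φ'.C = Φ.C ∧ Φ'.X = Φ.X.erase x ∧ Φ'.Y0 = Φ.Y0 ∧ Φ'.Y1 = Φ.Y1 ∧
    Φ'.A1 = (fun i j => if i = x then 0 else Φ.A1 i j) ∧
    Φ'.Δ = Φ.Δ ∧ (Φ'.Λ : Set (ℕ → F)) = maskOn (Φ.X.erase x) '' ↑Φ.Λ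

/-- Operation (7): contract an element `c ∈ C` whose `A₁`-column is a unit column with
its nonzero entry in row `x`, where `λ_x = 0` for all `λ ∈ Λ` or `δ_c = 0` for all
`δ ∈ Δ`; remove `c` from `C` and `x` from `X`. -/
def Op7 (Φ Φ' : FrameTemplate F) : Prop :=
  ∃ c ∈ Φ.C, ∃ x ∈ Φ.X,
    Φ.A1 x c = 1 ∧ (∀ i, i ≠ x → Φ.A1 i c = 0) ∧
    ((∀ v ∈ Φ.Λ, v x = 0) ∨ (∀ v ∈ Φ.Δ, v c = 0)) ∧
    Φ'.Γ = Φ.Γ ∧ Φ'.C = Φ.C.erase c ∧ Φ'.X = Φ.X.erase x ∧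
    Φ'.Y0 = Φ.Y0 ∧ Φ'.Y1 = Φ.Y1 ∧
    Φ'.A1 = (fun i j => if i = x ∨ j = c then 0 else Φ.A1 i j) ∧
    (Φ'.Λ : Set (ℕ → F)) = maskOn (Φ.X.erase x) '' ↑Φ.Λ ∧
    (Φ'.Δ : Set (ℕ → F)) =
      maskOn Φ'.CY '' ((fun v : ℕ → F => v - v c • Φ.A1 x) '' ↑Φ.Δ)

/-- Operation (8): remove an element `c ∈ C` whose `A₁`-column is zero and with
`δ_c = 0` for all `δ ∈ Δ`. -/
def Op8 (Φ Φ' : FrameTemplate F) : Prop :=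
  ∃ c ∈ Φ.C, (∀ i, Φ.A1 i c = 0) ∧ (∀ v ∈ Φ.Δ, v c = 0) ∧
    Φ'.Γ = Φ.Γ ∧ Φ'.C = Φ.C.erase c ∧ Φ'.X = Φ.X ∧ Φ'.Y0 = Φ.Y0 ∧ Φ'.Y1 = Φ.Y1 ∧
    Φ'.A1 = Φ.A1 ∧ (Φ'.Δ : Set (ℕ → F)) = maskOn Φ'.CY '' ↑Φ.Δ ∧ Φ'.Λ = Φ.Λ

/-- Operation (10): remove an element `y` from `Y₀` (deleting `y` from every matroid
conforming to `Φ`). -/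
def Op10 (Φ Φ' : FrameTemplate F) : Prop :=
  ∃ y ∈ Φ.Y0, Φ'.Γ = Φ.Γ ∧ Φ'.C = Φ.C ∧ Φ'.X = Φ.X ∧ Φ'.Y0 = Φ.Y0.erase y ∧
    Φ'.Y1 = Φ.Y1 ∧
    Φ'.A1 = (fun i j => if j = y then 0 else Φ.A1 i j) ∧
    (Φ'.Δ : Set (ℕ → F)) = maskOn Φ'.CY '' ↑Φ.Δ ∧ Φ'.Λ = Φ.Λ

/-- Operation (11): for `x ∈ X` with `λ_x = 0` for every `λ ∈ Λ` and `y ∈ Y₀` whose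
`A₁`-column is (after row operations, which are available as operation (5)) a unit
column with nonzero entry in row `x`, contract `y` from every matroid conforming
to `Φ`. -/
def Op11 (Φ Φ' : FrameTemplate F) : Prop :=
  ∃ y ∈ Φ.Y0, ∃ x ∈ Φ.X,
    (∀ v ∈ Φ.Λ, v x = 0) ∧ Φ.A1 x y = 1 ∧ (∀ i, i ≠ x → Φ.A1 i y = 0) ∧
    Φ'.Γ = Φ.Γ ∧ Φ'.C = Φ.C ∧ Φ'.X = Φ.X.erase x ∧ Φ'.Y0 = Φ.Y0.erase y ∧
    Φ'.Y1 = Φ.Y1 ∧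
    Φ'.A1 = (fun i j => if i = x ∨ j = y then 0 else Φ.A1 i j) ∧
    (Φ'.Λ : Set (ℕ → F)) = maskOn (Φ.X.erase x) '' ↑Φ.Λ ∧
    (Φ'.Δ : Set (ℕ → F)) =
      maskOn Φ'.CY '' ((fun v : ℕ → F => v - v y • Φ.A1 x) '' ↑Φ.Δ)

/-- Operation (12): for `y ∈ Y₀` with `δ_y = 0` for every `δ ∈ Δ`, contract `y` from
every matroid conforming to `Φ`.  If the `A₁`-column of `y` is zero this just removes
`y`; otherwise (after row operations, available as operation (5)) the column of `y` is a
unit column with nonzero entry in some row `x`, which is removed together with `y`. -/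
def Op12 (Φ Φ' : FrameTemplate F) : Prop :=
  ∃ y ∈ Φ.Y0, (∀ v ∈ Φ.Δ, v y = 0) ∧
    (((∀ i, Φ.A1 i y = 0) ∧
      Φ'.Γ = Φ.Γ ∧ Φ'.C = Φ.C ∧ Φ'.X = Φ.X ∧ Φ'.Y0 = Φ.Y0.erase y ∧ Φ'.Y1 = Φ.Y1 ∧
      Φ'.A1 = Φ.A1 ∧ (Φ'.Δ : Set (ℕ → F)) = maskOn Φ'.CY '' ↑Φ.Δ ∧ Φ'.Λ = Φ.Λ) ∨
    (∃ x ∈ Φ.X, Φ.A1 x y = 1 ∧ (∀ i, i ≠ x → Φ.A1 i y = 0) ∧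
      Φ'.Γ = Φ.Γ ∧ Φ'.C = Φ.C ∧ Φ'.X = Φ.X.erase x ∧ Φ'.Y0 = Φ.Y0.erase y ∧
      Φ'.Y1 = Φ.Y1 ∧
      Φ'.A1 = (fun i j => if i = x ∨ j = y then 0 else Φ.A1 i j) ∧
      (Φ'.Λ : Set (ℕ → F)) = maskOn (Φ.X.erase x) '' ↑Φ.Λ ∧
      (Φ'.Δ : Set (ℕ → F)) = maskOn Φ'.CY '' ↑Φ.Δ))

/-- A single template operation, from Proposition 3.2 ((1)–(8)) and
Definition 3.3 ((10)–(12)). -/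
def Step (Φ Φ' : FrameTemplate F) : Prop :=
  Op1 Φ Φ' ∨ Op2 Φ Φ' ∨ Op3 Φ Φ' ∨ Op4 Φ Φ' ∨ Op5 Φ Φ' ∨ Op6 Φ Φ' ∨ Op7 Φ Φ' ∨
    Op8 Φ Φ' ∨ Op10 Φ Φ' ∨ Op11 Φ Φ' ∨ Op12 Φ Φ'

/-- `Φ'` is a template minor of `Φ`: it is obtained from `Φ` by repeatedly performing
the operations (1)-(8) and (10)-(12). -/
def IsTemplateMinor (Φ' Φ : FrameTemplate F) : Prop :=
  Relation.ReflTransGen Step Φ Φ'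

/-- `M` weakly conforms to `Φ`: `M` virtually conforms to some template minor of `Φ`. -/
def WConforms (M : Matroid α) (Φ : FrameTemplate F) : Prop :=
  ∃ Φ'', IsTemplateMinor Φ'' Φ ∧ VConforms M Φ''

/-- The preorder on templates: `Φ ⪯ Φ'` iff every matroid weakly conforming to `Φ`
weakly conforms to `Φ'`, i.e. `𝓜_w(Φ) ⊆ 𝓜_w(Φ')`. -/
def Preceq (Φ Φ' : FrameTemplate F) : Prop :=
  ∀ (α : Type) (M : Matroid α), WConforms M Φ → WConforms M Φ'

/-- Equivalence of templates: `𝓜_w(Φ) = 𝓜_w(Φ')`. -/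
def TEquiv (Φ Φ' : FrameTemplate F) : Prop :=
  ∀ (α : Type) (M : Matroid α), WConforms M Φ ↔ WConforms M Φ'

/-- A binary frame template: a frame template over `GF(2)` with `Γ` trivial. -/
def IsBinaryT (Φ : FrameTemplate (ZMod 2)) : Prop := Φ.Γ = ⊥

end FrameTemplate

namespace FrameTemplate

lemma bot_smul_mem {F : Type} [Field F] (G : AddSubgroup (ℕ → F)) :
    ∀ γ ∈ (⊥ : Subgroup Fˣ), ∀ v ∈ G, (γ : F) • v ∈ G := by
  intro γ hγ v hv
  rw [Subgroup.mem_bot] at hγ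
  subst hγ
  simpa using hv

lemma bot_supp {F : Type} [Field F] (S : Finset ℕ) :
    ∀ v ∈ (⊥ : AddSubgroup (ℕ → F)), ∀ i ∉ S, v i = 0 := by
  intro v hv i _
  rw [AddSubgroup.mem_bot] at hv
  simp [hv]

lemma fullOn_supp {F : Type} [Field F] (S : Finset ℕ) :
    ∀ v ∈ fullOn F S, ∀ i ∉ S, v i = 0 := fun _ hv => hv

/-- The trivial template `Φ₀`: all groups trivial and all sets empty. -/
def Phi0 : FrameTemplate (ZMod 2) where
  Γ := ⊥
  C := ∅
  X := ∅
  Y0 := ∅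
  Y1 := ∅
  disj := by simp
  A1 := fun _ _ => 0
  A1_supp := by intro i j h; exact absurd rfl h
  Δ := ⊥
  Δ_supp := bot_supp _
  Δ_smul := bot_smul_mem _
  Λ := ⊥
  Λ_supp := bot_supp _
  Λ_smul := bot_smul_mem _

/-- The template `Φ_C`: all groups trivial and all sets empty except `|C| = 1` and
`Δ ≅ ℤ/2ℤ`. -/
def PhiC : FrameTemplate (ZMod 2) where
  Γ := ⊥
  C := {0}
  X := ∅
  Y0 := ∅
  Y1 := ∅
  disj := by simp
  A1 := fun _ _ => 0
  A1_supp := by intro i j h; exact absurd rfl h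
  Δ := fullOn (ZMod 2) {0}
  Δ_supp := by simpa using fullOn_supp (F := ZMod 2) {0}
  Δ_smul := bot_smul_mem _
  Λ := ⊥
  Λ_supp := bot_supp _
  Λ_smul := bot_smul_mem _

/-- The template `Φ_X`: all groups trivial and all sets empty except `|X| = 1` and
`Λ ≅ ℤ/2ℤ`. -/
def PhiX : FrameTemplate (ZMod 2) where
  Γ := ⊥
  C := ∅
  X := {0}
  Y0 := ∅
  Y1 := ∅
  disj := by simp
  A1 := fun _ _ => 0
  A1_supp := by intro i j h; exact absurd rfl h
  Δ := ⊥
  Δ_supp := bot_supp _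
  Δ_smul := bot_smul_mem _
  Λ := fullOn (ZMod 2) {0}
  Λ_supp := fullOn_supp _
  Λ_smul := bot_smul_mem _

/-- The template `Φ_{Y₀}`: all groups trivial and all sets empty except `|Y₀| = 1` and
`Δ ≅ ℤ/2ℤ`. -/
def PhiY0 : FrameTemplate (ZMod 2) where
  Γ := ⊥
  C := ∅
  X := ∅
  Y0 := {0}
  Y1 := ∅
  disj := by simp
  A1 := fun _ _ => 0
  A1_supp := by intro i j h; exact absurd rfl h
  Δ := fullOn (ZMod 2) {0}
  Δ_supp := by simpa using fullOn_supp (F := ZMod 2) {0}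
  Δ_smul := bot_smul_mem _
  Λ := ⊥
  Λ_supp := bot_supp _
  Λ_smul := bot_smul_mem _

/-- The template `Φ_{CX}`: `Y₀ = Y₁ = ∅`, `|C| = |X| = 1`, `Δ ≅ Λ ≅ ℤ/2ℤ`, `Γ` trivial,
and `A₁ = [1]`. -/
def PhiCX : FrameTemplate (ZMod 2) where
  Γ := ⊥
  C := {0}
  X := {1}
  Y0 := ∅
  Y1 := ∅
  disj := by simp
  A1 := fun i j => if i = 1 ∧ j = 0 then 1 else 0
  A1_supp := by
    intro i j h
    by_cases hc : i = 1 ∧ j = 0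
    · obtain ⟨hi, hj⟩ := hc
      subst hi; subst hj
      simp
    · simp [hc] at h
  Δ := fullOn (ZMod 2) {0}
  Δ_supp := by simpa using fullOn_supp (F := ZMod 2) {0}
  Δ_smul := bot_smul_mem _
  Λ := fullOn (ZMod 2) {1}
  Λ_supp := fullOn_supp _
  Λ_smul := bot_smul_mem _

/-- The template `Φ_{Y₁}`: all groups trivial, `C = Y₀ = ∅`, `|Y₁| = 3`, `|X| = 2`, and
`A₁ = [[1,0,1],[0,1,1]]` (rows `0, 1`; columns `2, 3, 4`). -/
def PhiY1 : FrameTemplate (ZMod 2) where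
  Γ := ⊥
  C := ∅
  X := {0, 1}
  Y0 := ∅
  Y1 := {2, 3, 4}
  disj := by simp [Finset.disjoint_left]
  A1 := fun i j =>
    if (i = 0 ∧ (j = 2 ∨ j = 4)) ∨ (i = 1 ∧ (j = 3 ∨ j = 4)) then 1 else 0
  A1_supp := by
    intro i j h
    by_cases hc : (i = 0 ∧ (j = 2 ∨ j = 4)) ∨ (i = 1 ∧ (j = 3 ∨ j = 4))
    · constructor
      · rcases hc with ⟨hi, _⟩ | ⟨hi, _⟩ <;> subst hi <;> simp
      · rcases hc with ⟨_, hj | hj⟩ | ⟨_, hj | hj⟩ <;> subst hj <;> simp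
    · simp [hc] at h
  Δ := ⊥
  Δ_supp := bot_supp _
  Δ_smul := bot_smul_mem _
  Λ := ⊥
  Λ_supp := bot_supp _
  Λ_smul := bot_smul_mem _

/-- A trivial template: one that is `⪯ Φ₀`. -/
def IsTrivialT (Φ : FrameTemplate (ZMod 2)) : Prop := Preceq Φ Phi0

variable {F : Type} [Field F]

/-- `Φ` is in standard form, with the witnessing partitions `C = C₀ ∪ C₁` and
`X = X₀ ∪ X₁`: `A₁[X₀, C₀]` is an identity matrix and `A₁[X₁, C]` is a zero matrix. -/
def StandardFormOn (Φ : FrameTemplate F) (C0 C1 X0 X1 : Finset ℕ) : Prop :=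
  Φ.C = C0 ∪ C1 ∧ Disjoint C0 C1 ∧ Φ.X = X0 ∪ X1 ∧ Disjoint X0 X1 ∧
  (∃ g : ℕ → ℕ, Set.BijOn g ↑X0 ↑C0 ∧
    ∀ x ∈ X0, ∀ c ∈ C0, Φ.A1 x c = if g x = c then 1 else 0) ∧
  (∀ x ∈ X1, ∀ c ∈ Φ.C, Φ.A1 x c = 0)

/-- `Φ` is in standard form. -/
def StandardForm (Φ : FrameTemplate F) : Prop :=
  ∃ C0 C1 X0 X1, StandardFormOn Φ C0 C1 X0 X1

end FrameTemplate


open FrameTemplate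

/-- The set of binary frame templates `{Φ₁, …, Φ_s, Ψ₁, …, Ψ_t}` describes the
minor-closed class `𝓜` of binary matroids (Definition 3.16 of the paper). -/
def Describes (𝓜 : Set (Matroid ℕ)) (Φs Ψs : List (FrameTemplate (ZMod 2))) : Prop :=
  ∃ k l m : ℕ, 0 < k ∧ 0 < l ∧ 0 < m ∧
    (∀ Φ ∈ Φs, ∀ M : Matroid ℕ, WConforms M Φ → M ∈ 𝓜) ∧
    (∀ Ψ ∈ Ψs, ∀ M : Matroid ℕ, WConforms M Ψ → M✶ ∈ 𝓜) ∧
    (∀ M ∈ 𝓜, IsSimple M → VertConn M k → (l : ℕ∞) ≤ M.E.encard →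
      ¬ (∃ N : Matroid ℕ, MinorOf N M ∧ IsPG m N) →
      ((∃ Φ ∈ Φs, VConforms M Φ) ∨ (∃ Ψ ∈ Ψs, VConforms M✶ Ψ))) ∧
    (∀ Φ ∈ Φs ++ Ψs, IsTrivialT Φ ∨
      ∃ Φ' ∈ [PhiX, PhiC, PhiCX, PhiY0, PhiY1], Preceq Φ' Φ)

section LinearAlgebra

open Submodule

variable {ι K V V' : Type*} [Field K] [AddCommGroup V] [Module K V] [AddCommGroup V']
  [Module K V']

lemma linearIndepOn_exists_insert_of_ncard_lt {v : ι → V} {I J : Set ι} (hI : I.Finite)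
    (hJ : J.Finite) (hIv : LinearIndepOn K v I) (hJv : LinearIndepOn K v J)
    (hIJ : I.ncard < J.ncard) : ∃ e ∈ J, e ∉ I ∧ LinearIndepOn K v (insert e I) := by
  by_contra! hcon
  have hJI : v '' J ⊆ span K (v '' I) := by
    rintro _ ⟨e, he, rfl⟩
    by_cases heI : e ∈ I
    · exact subset_span ⟨e, heI, rfl⟩
    · by_contra hnot
      exact hcon e he heI ((linearIndepOn_insert heI).2 ⟨hIv, hnot⟩)
  have := (hI.image v).fintype
  have := (hJ.image v).fintype
  have := FiniteDimensional.span_of_finite K (hI.image v)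
  have hrank : J.ncard ≤ I.ncard := calc
    J.ncard = (v '' J).ncard := hJv.injOn.ncard_image.symm
    _ = Module.finrank K (span K (v '' J)) := by
      rw [finrank_span_set_eq_card hJv.id_image, Set.ncard_eq_toFinset_card']
    _ ≤ Module.finrank K (span K (v '' I)) := Submodule.finrank_mono (span_le.2 hJI)
    _ ≤ (v '' I).ncard := by
      rw [Set.ncard_eq_toFinset_card']; exact finrank_span_le_card _
    _ ≤ I.ncard := Set.ncard_image_le hI
  omega

lemma ker_id_sub_smulRight {ℓ : V →ₗ[K] K} {u : V} (hu : ℓ u = 1) :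
    LinearMap.ker (LinearMap.id - ℓ.smulRight u) = K ∙ u := by
  ext x
  simp only [LinearMap.mem_ker, LinearMap.sub_apply, LinearMap.id_apply,
    LinearMap.smulRight_apply, sub_eq_zero, mem_span_singleton]
  constructor
  · exact fun h => ⟨ℓ x, h.symm⟩
  · rintro ⟨c, rfl⟩
    simp [hu]

lemma linearIndepOn_insert_iff_comp {v : ι → V} {a : ι} {s : Set ι} (has : a ∉ s)
    (hva : v a ≠ 0) {p : V →ₗ[K] V'} (hp : LinearMap.ker p = K ∙ v a) :
    LinearIndepOn K v (insert a s) ↔ LinearIndepOn K (p ∘ v) s := by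
  have hrange : Set.range (fun x : s => v x) = v '' s := (Set.image_eq_range v s).symm
  rw [linearIndepOn_insert has, ← disjoint_span_singleton' hva, ← hp]
  constructor
  · rintro ⟨hs, hdisj⟩
    exact LinearIndependent.map hs (by rwa [hrange])
  · intro h
    refine ⟨LinearIndependent.of_comp p h, ?_⟩
    rw [← hrange]
    exact Submodule.range_ker_disjoint h

/-- Projecting along `v₂ a = w - v a` sends `v₂ f = w` to `v a`. -/
lemma linearIndepOn_insert_image_swap_iff [DecidableEq ι] {v v₂ : ι → V} {ℓ : V →ₗ[K] K}
    {w : V} {a f : ι} {I : Set ι} (hℓv : ∀ e, ℓ (v e) = 0) (hℓw : ℓ w = 1) (hfI : f ∉ I)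
    (hva : v₂ a = w - v a) (hvf : v₂ f = w) (hv : ∀ e ∈ I, e ≠ a → v₂ e = v e) :
    LinearIndepOn K v₂ (insert a (Equiv.swap a f '' I)) ↔ LinearIndepOn K v I := by
  have hℓa : ℓ (v₂ a) = 1 := by rw [hva, map_sub, hℓw, hℓv, sub_zero]
  have ha : a ∉ Equiv.swap a f '' I := by
    rintro ⟨x, hx, hxa⟩
    rw [Equiv.swap_apply_eq_iff, Equiv.swap_apply_left] at hxa
    exact hfI (hxa ▸ hx)
  have hva0 : v₂ a ≠ 0 := fun h => by simp [h] at hℓa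
  set p := LinearMap.id - ℓ.smulRight (v₂ a)
  have hpv : Set.EqOn (p ∘ v₂ ∘ Equiv.swap a f) v I := by
    intro x hx
    by_cases hxa : x = a
    · subst hxa
      simp [p, hvf, hℓw, hva]
    · have hxf : x ≠ f := fun h => hfI (h ▸ hx)
      simp [p, Equiv.swap_apply_of_ne_of_ne hxa hxf, hv x hx hxa, hℓv]
  rw [linearIndepOn_insert_iff_comp ha hva0 (ker_id_sub_smulRight hℓa), ← linearIndepOn_congr hpv]
  exact ⟨fun h => h.comp_of_image (Equiv.injective _).injOn,
    fun h => h.image_of_comp (Equiv.swap a f) (p ∘ v₂)⟩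

end LinearAlgebra

section ColumnMatroid

variable {ι V : Type*} [AddCommGroup V]

noncomputable def colMatroid (K : Type*) [Field K] [Module K V] (v : ι → V) (E : Finset ι) :
    Matroid ι :=
  (IndepMatroid.ofFinite E.finite_toSet (fun I => I ⊆ ↑E ∧ LinearIndepOn K v I)
    ⟨Set.empty_subset _, linearIndepOn_empty K v⟩
    (fun _ _ hJ hIJ => ⟨hIJ.trans hJ.1, hJ.2.mono hIJ⟩)
    (fun _ _ hI hJ hlt => by
      obtain ⟨e, heJ, heI, he⟩ := linearIndepOn_exists_insert_of_ncard_lt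
        (E.finite_toSet.subset hI.1) (E.finite_toSet.subset hJ.1) hI.2 hJ.2 hlt
      exact ⟨e, heJ, heI, Set.insert_subset (hJ.1 heJ) hI.1, he⟩)
    (fun _ hI => hI.1)).matroid

variable {K : Type*} [Field K] [Module K V]

@[simp] lemma colMatroid_ground (v : ι → V) (E : Finset ι) : (colMatroid K v E).E = ↑E := rfl

@[simp] lemma colMatroid_indep_iff {v : ι → V} {E : Finset ι} {I : Set ι} :
    (colMatroid K v E).Indep I ↔ I ⊆ ↑E ∧ LinearIndepOn K v I := by
  simp [colMatroid]

end ColumnMatroid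

section ColMatroidOf

variable {β β' : Type*} {F : Type} [Field F] {N : Matroid ℕ} {E : Finset ℕ} {A : β → ℕ → F}

lemma isColMatroidOf_colMatroid (E : Finset ℕ) (A : β → ℕ → F) :
    IsColMatroidOf (colMatroid F (fun j i => A i j) E) E A :=
  ⟨rfl, fun _ => colMatroid_indep_iff⟩

lemma IsColMatroidOf.perm_rows (h : IsColMatroidOf N E A) (π : β' ≃ β) :
    IsColMatroidOf N E (fun i j => A (π i) j) := by
  refine ⟨h.1, fun I => ?_⟩
  rw [h.2 I]
  refine and_congr_right fun _ => ?_
  exact (LinearMap.linearIndependent_iff (LinearEquiv.funCongrLeft F F π).toLinearMap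
    (LinearEquiv.ker _)).symm

lemma IsColMatroidOf.restrict (h : IsColMatroidOf N E A) {E' : Finset ℕ} (hE' : E' ⊆ E) :
    IsColMatroidOf (N ↾ ↑E') E' (fun i j => if j ∈ E' then A i j else 0) := by
  refine ⟨rfl, fun I => ?_⟩
  rw [Matroid.restrict_indep_iff, h.2 I, and_comm]
  refine and_congr_right fun hI => ?_
  have hcols : Set.EqOn (fun j i => if j ∈ E' then A i j else 0) (fun j i => A i j) I :=
    fun j hj => funext fun _ => if_pos (hI hj)
  rw [and_iff_right (hI.trans (Finset.coe_subset.2 hE'))]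
  exact (linearIndepOn_congr hcols).symm

end ColMatroidOf

lemma isContraction_contract (M : Matroid α) (K : Set α) : IsContraction (M ／ K) M K := by
  refine ⟨Matroid.contract_ground M K, fun I => ⟨fun hI => ?_, ?_⟩⟩
  · obtain ⟨J, hJ⟩ := M.exists_isBasis (K ∩ M.E)
    refine ⟨hI.subset_ground, J, hJ, ?_⟩
    rw [← Matroid.contract_inter_ground_eq, hJ.contract_indep_iff] at hI
    exact hI.1
  · rintro ⟨hIE, J, hJ, hIJ⟩
    rw [← Matroid.contract_inter_ground_eq, hJ.contract_indep_iff]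
    exact ⟨hIJ, (Set.subset_sdiff.1 hIE).2.symm.mono_left Set.inter_subset_left⟩

lemma IsContraction.eq_contract {N M : Matroid α} {K : Set α} (h : IsContraction N M K) :
    N = M ／ K :=
  Matroid.ext_indep (by rw [h.1, Matroid.contract_ground]) fun I _ => by
    rw [h.2 I, (isContraction_contract M K).2 I]

lemma MIso.trans {M : Matroid α} {N : Matroid β} {P : Matroid γ}
    (h₁ : MIso M N) (h₂ : MIso N P) : MIso M P := by
  obtain ⟨f, hf, hfI⟩ := h₁
  obtain ⟨g, hg, hgI⟩ := h₂
  refine ⟨g ∘ f, hg.comp hf, fun I hI => ?_⟩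
  rw [hfI I hI, Set.image_comp, hgI _ (hf.image_eq ▸ Set.image_mono hI)]

section FrameColumns

variable {F : Type} [Field F] {Γ : Subgroup Fˣ} {S : Set ℕ} {v : ℕ → F}

lemma maskOn_mem_fullOn (S : Finset ℕ) (v : ℕ → F) : maskOn S v ∈ fullOn F S :=
  fun _ hi => if_neg hi

@[simp] lemma maskOn_empty (v : ℕ → F) : maskOn ∅ v = 0 :=
  funext fun _ => if_neg (Finset.notMem_empty _)

lemma IsFrameColOn.insert (h : IsFrameColOn Γ S v) {a : ℕ} (ha : v a = 0) :
    IsFrameColOn Γ (insert a S) v := by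
  rcases h with h | ⟨b, hb, h1, h0⟩ | ⟨b₁, hb₁, b₂, hb₂, hne, h1, h2, h0⟩
  · exact Or.inl fun b hb => hb.elim (· ▸ ha) (h b)
  · exact Or.inr <| Or.inl ⟨b, .inr hb, h1, fun b' hb' hne => hb'.elim (· ▸ ha) (h0 b' · hne)⟩
  · exact Or.inr <| Or.inr ⟨b₁, .inr hb₁, b₂, .inr hb₂, hne, h1, h2,
      fun b hb hne₁ hne₂ => hb.elim (· ▸ ha) (h0 b · hne₁ hne₂)⟩

lemma IsFrameColOn.comp_equiv (h : IsFrameColOn Γ S v) (π : ℕ ≃ ℕ) :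
    IsFrameColOn Γ (π ⁻¹' S) (v ∘ π) := by
  rcases h with h | ⟨b, hb, h1, h0⟩ | ⟨b₁, hb₁, b₂, hb₂, hne, h1, h2, h0⟩
  · exact Or.inl fun b hb => h _ hb
  · refine Or.inr <| Or.inl ⟨π.symm b, by simpa using hb, by simpa using h1, fun b' hb' hne => ?_⟩
    exact h0 _ hb' fun h => hne (by simp [← h])
  · refine Or.inr <| Or.inr ⟨π.symm b₁, by simpa using hb₁, π.symm b₂, by simpa using hb₂,
      by simpa using hne, by simpa using h1, by simpa using h2, fun b hb hne₁ hne₂ => ?_⟩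
    exact h0 _ hb (fun h => hne₁ (by simp [← h])) fun h => hne₂ (by simp [← h])

lemma isFrameColOn_bot_of_support_pair {v : ℕ → ZMod 2} {b₁ b₂ : ℕ} (hb₁ : b₁ ∈ S)
    (hb₂ : b₂ ∈ S) (hne : b₁ ≠ b₂) (h1 : v b₁ = 1) (h0 : ∀ b ∈ S, b ≠ b₁ → b ≠ b₂ → v b = 0) :
    IsFrameColOn ⊥ S v := by
  rcases (by decide : ∀ x : ZMod 2, x = 0 ∨ x = 1) (v b₂) with h2 | h2
  · refine Or.inr <| Or.inl ⟨b₁, hb₁, h1, fun b hb hbne => ?_⟩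
    by_cases hb₂' : b = b₂
    · rwa [hb₂']
    · exact h0 b hb hbne hb₂'
  · exact Or.inr <| Or.inr ⟨b₁, hb₁, b₂, hb₂, hne, h1, ⟨1, Subgroup.one_mem _, by rw [h2]; rfl⟩, h0⟩

end FrameColumns

namespace FrameTemplate

variable {F : Type} [Field F] {M : Matroid α} {Φ : FrameTemplate F}

lemma Conforms.vConforms (h : Conforms M Φ) : VConforms M Φ := by
  obtain ⟨B, E, Z, A', A, N, N₁, ⟨h1, h2, h3, h4, h5, h6, h7, hZ, hcols⟩, hrest⟩ := h
  exact ⟨B, E, Z, A', A, N, N₁, ⟨h1, h2, h3, h4, h5, h6, h7, fun j hj => .inr (hZ j hj), hcols⟩,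
    hrest⟩

lemma VConforms.wConforms (h : VConforms M Φ) : WConforms M Φ :=
  ⟨Φ, Relation.ReflTransGen.refl, h⟩

lemma VRespects.vConforms {B E : Finset ℕ} {A : ℕ → ℕ → F} {N : Matroid ℕ}
    (hA : Φ.VRespects B E ∅ A) (hN : IsColMatroidOf N E A) (hY1 : Φ.Y1 = ∅)
    (hM : MIso M (N ／ ↑Φ.C)) : VConforms M Φ := by
  refine ⟨B, E, ∅, A, A, N, N ／ ↑Φ.C, hA, ⟨fun _ _ _ => rfl, by simp⟩, hN,
    isContraction_contract N _, ?_⟩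
  rwa [hY1, Finset.coe_empty, Set.sdiff_empty, Matroid.restrict_ground_eq_self]

lemma Conforms.exists_respects (h : Conforms M Φ) (hY1 : Φ.Y1 = ∅) :
    ∃ (B E : Finset ℕ) (A : ℕ → ℕ → F) (N : Matroid ℕ),
      Φ.Respects B E ∅ A ∧ IsColMatroidOf N E A ∧ MIso M (N ／ ↑Φ.C) := by
  obtain ⟨B, E, Z, A', A, N, N₁, hA', ⟨hAoff, hAZ⟩, hN, hN₁, hM⟩ := h
  have hZ : Z = ∅ := Finset.eq_empty_of_forall_notMem fun j hj => by
    obtain ⟨y, hy, -⟩ := hAZ j hj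
    simp [hY1] at hy
  subst hZ
  have hAA' : A = A' := funext fun i => funext fun j => hAoff j (Finset.notMem_empty j) i
  subst hAA'
  rw [hY1, Finset.coe_empty, Set.sdiff_empty, Matroid.restrict_ground_eq_self,
    hN₁.eq_contract] at hM
  exact ⟨B, E, A, N, hA', hN, hM⟩

end FrameTemplate

def IsFrameMatrixExcept {F : Type} [Field F] (Γ : Subgroup Fˣ) (B E : Finset ℕ) (a : ℕ)
    (A : ℕ → ℕ → F) : Prop :=
  a ∈ E ∧ (∀ i j, A i j ≠ 0 → i ∈ B ∧ j ∈ E) ∧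
    ∀ j ∈ E, j ≠ a → IsFrameColOn Γ ↑B (fun i => A i j)

lemma IsFrameMatrixExcept.perm_rows {F : Type} [Field F] {Γ : Subgroup Fˣ} {B E : Finset ℕ}
    {a : ℕ} {A : ℕ → ℕ → F} (hA : IsFrameMatrixExcept Γ B E a A) (π : ℕ ≃ ℕ) :
    IsFrameMatrixExcept Γ (B.image π.symm) E a (fun i j => A (π i) j) := by
  obtain ⟨haE, hsupp, hframe⟩ := hA
  refine ⟨haE, fun i j hij => ?_, fun j hj hja => ?_⟩
  · obtain ⟨hi, hj⟩ := hsupp _ _ hij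
    exact ⟨Finset.mem_image.2 ⟨π i, hi, π.symm_apply_apply i⟩, hj⟩
  · rw [Finset.coe_image, Equiv.image_symm_eq_preimage]
    exact (hframe j hj hja).comp_equiv π

section TemplateIntro

variable {M : Matroid α} {B E : Finset ℕ} {A : ℕ → ℕ → ZMod 2} {N : Matroid ℕ}

lemma vConforms_phiC_of (hA : IsFrameMatrixExcept ⊥ B E 0 A) (hN : IsColMatroidOf N E A)
    (hM : MIso M (N ／ {0})) : VConforms M PhiC := by
  obtain ⟨h0E, hsupp, hframe⟩ := hA
  refine VRespects.vConforms ⟨by simp [PhiC], by simpa [PhiC, FrameTemplate.CY], by simp,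
    by simp, hsupp, by simp [PhiC], by simp, by simp, fun j hj hjC _ => ?_,
    fun _ _ _ _ => ?_, fun _ _ _ => maskOn_mem_fullOn _ _⟩ hN rfl (by simpa [PhiC] using hM)
  · simpa [PhiC, FrameTemplate.CY] using hframe j hj (by simpa [PhiC, FrameTemplate.CY] using hjC)
  · simp [PhiC]

lemma vConforms_phiCX_of (h1B : 1 ∉ B) (h0E : 0 ∈ E)
    (hsupp : ∀ i j, A i j ≠ 0 → i ∈ insert 1 B ∧ j ∈ E) (hA : A 1 0 = 1)
    (hframe : ∀ j ∈ E, j ≠ 0 → IsFrameColOn ⊥ ↑B (fun i => A i j))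
    (hN : IsColMatroidOf N E A) (hM : MIso M (N ／ {0})) : VConforms M PhiCX := by
  have hB : (↑(insert 1 B) : Set ℕ) \ ↑PhiCX.X = ↑B := by simpa [PhiCX]
  refine VRespects.vConforms ⟨by simp [PhiCX], by simpa [PhiCX, FrameTemplate.CY], by simp,
    by simp, hsupp, by simpa [PhiCX, FrameTemplate.CY], by simp, by simp,
    fun j hj hjC _ => ?_, fun _ _ _ _ => maskOn_mem_fullOn _ _,
    fun _ _ _ => maskOn_mem_fullOn _ _⟩ hN rfl (by simpa [PhiCX] using hM)
  rw [hB]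
  exact hframe j hj (by simpa [PhiCX, FrameTemplate.CY] using hjC)

lemma vConforms_phiX_of (h0B : 0 ∈ B) (hsupp : ∀ i j, A i j ≠ 0 → i ∈ B ∧ j ∈ E)
    (hframe : ∀ j ∈ E, IsFrameColOn ⊥ (↑B \ {0}) (fun i => A i j))
    (hN : IsColMatroidOf N E A) (hM : MIso M N) : VConforms M PhiX := by
  refine VRespects.vConforms ⟨by simpa [PhiX], by simp [PhiX, FrameTemplate.CY], by simp,
    by simp, hsupp, by simp [PhiX, FrameTemplate.CY], by simp, by simp,
    fun j hj _ _ => by simpa [PhiX] using hframe j hj, fun _ _ _ _ => maskOn_mem_fullOn _ _,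
    fun _ _ _ => by simp [PhiX, FrameTemplate.CY]⟩ hN rfl (by simpa [PhiX] using hM)

end TemplateIntro

lemma bijOn_swap_insert_sdiff [DecidableEq α] {E : Finset α} {a f : α} (ha : a ∈ E)
    (hf : f ∉ E) : Set.BijOn (Equiv.swap a f) ↑E (↑(insert f E) \ {a}) := by
  have hfa : f ≠ a := fun h => hf (h ▸ ha)
  refine ⟨fun x hx => ?_, (Equiv.injective _).injOn, fun y hy => ?_⟩
  · by_cases hxa : x = a
    · simp [hxa, hfa]
    · have hxf : x ≠ f := fun h => hf (h ▸ hx)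
      simp [Equiv.swap_apply_of_ne_of_ne hxa hxf, hx, hxa]
  · obtain ⟨hyf | hyE, hya⟩ : (y = f ∨ y ∈ E) ∧ y ≠ a := by simpa using hy
    · exact ⟨a, ha, hyf ▸ Equiv.swap_apply_left a f⟩
    · exact ⟨y, hyE, Equiv.swap_apply_of_ne_of_ne hya fun h => hf (h ▸ hyE)⟩

/-- The new row is row `1`, the `X`-row of `Φ_{CX}`; `0` is the free column of `A`. -/
def coextMatrix (A : ℕ → ℕ → ZMod 2) (f : ℕ) : ℕ → ℕ → ZMod 2 :=
  fun i j => A i j + if i = 1 ∧ (j = 0 ∨ j = f) then 1 else 0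

section Coextension

variable {B E : Finset ℕ} {A : ℕ → ℕ → ZMod 2} {f : ℕ}

lemma coextMatrix_of_ne {i j : ℕ} (hj0 : j ≠ 0) (hjf : j ≠ f) : coextMatrix A f i j = A i j := by
  simp [coextMatrix, hj0, hjf]

lemma coextMatrix_col_new (hf : f ∉ E) (hsupp : ∀ i j, A i j ≠ 0 → i ∈ B ∧ j ∈ E) :
    (fun i => coextMatrix A f i f) = Pi.single 1 1 := by
  funext i
  have hAf : A i f = 0 := by_contra fun h => hf (hsupp i f h).2
  simp [coextMatrix, hAf, Pi.single_apply]

lemma IsFrameMatrixExcept.coext (hA : IsFrameMatrixExcept ⊥ B E 0 A) (h1B : 1 ∉ B)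
    (hf : f ∉ E) : IsFrameMatrixExcept ⊥ (insert 1 B) (insert f E) 0 (coextMatrix A f) := by
  obtain ⟨h0E, hsupp, hframe⟩ := hA
  refine ⟨Finset.mem_insert_of_mem h0E, fun i j hij => ?_, fun j hj hj0 => ?_⟩
  · by_cases hA : A i j = 0
    · have : i = 1 ∧ (j = 0 ∨ j = f) := by by_contra h; simp [coextMatrix, hA, h] at hij
      obtain ⟨rfl, rfl | rfl⟩ := this <;> simp [h0E]
    · exact ⟨Finset.mem_insert_of_mem (hsupp i j hA).1, Finset.mem_insert_of_mem (hsupp i j hA).2⟩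
  · rcases Finset.mem_insert.1 hj with rfl | hjE
    · rw [coextMatrix_col_new hf hsupp]
      exact Or.inr <| Or.inl ⟨1, by simp, by simp, fun b _ hb => by simp [hb]⟩
    · have hjf : j ≠ f := fun h => hf (h ▸ hjE)
      simp only [coextMatrix_of_ne hj0 hjf, Finset.coe_insert]
      exact (hframe j hjE hj0).insert (by_contra fun h => h1B (hsupp 1 j h).1)

lemma IsFrameMatrixExcept.coext_frameColOn (hA : IsFrameMatrixExcept ⊥ B E 0 A) (h1B : 1 ∉ B)
    (hf : f ∉ E) {j : ℕ} (hj : j ∈ insert f E) (hj0 : j ≠ 0) :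
    IsFrameColOn ⊥ ↑B (fun i => coextMatrix A f i j) := by
  obtain ⟨-, hsupp, hframe⟩ := hA
  rcases Finset.mem_insert.1 hj with rfl | hjE
  · rw [coextMatrix_col_new hf hsupp]
    exact Or.inl fun b hb => by simp [show b ≠ 1 from fun h => h1B (h ▸ hb)]
  · have hjf : j ≠ f := fun h => hf (h ▸ hjE)
    simpa only [coextMatrix_of_ne hj0 hjf] using hframe j hjE hj0

lemma coextMatrix_one_zero (h1B : 1 ∉ B) (hsupp : ∀ i j, A i j ≠ 0 → i ∈ B ∧ j ∈ E) :
    coextMatrix A f 1 0 = 1 := by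
  simp [coextMatrix, by_contra fun h => h1B (hsupp 1 0 h).1]

lemma IsColMatroidOf.miso_contract_coext {N : Matroid ℕ} (hN : IsColMatroidOf N E A)
    (hA : IsFrameMatrixExcept ⊥ B E 0 A) (h1B : 1 ∉ B) (hf : f ∉ E) :
    MIso N (colMatroid (ZMod 2) (fun j i => coextMatrix A f i j) (insert f E) ／ {0}) := by
  obtain ⟨h0E, hsupp, -⟩ := hA
  set N₂ := colMatroid (ZMod 2) (fun j i => coextMatrix A f i j) (insert f E)
  have hA1 : ∀ j, A 1 j = 0 := fun j => by_contra fun h => h1B (hsupp 1 j h).1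
  have hcore : ∀ I ⊆ (E : Set ℕ), LinearIndepOn (ZMod 2) (fun j i => coextMatrix A f i j)
      (insert 0 (Equiv.swap 0 f '' I)) ↔ LinearIndepOn (ZMod 2) (fun j i => A i j) I :=
    fun I hI => linearIndepOn_insert_image_swap_iff (ℓ := LinearMap.proj 1) (w := Pi.single 1 1)
      hA1 (by simp) (fun h => hf (hI h)) (funext fun i => by
        by_cases hi : i = 1 <;> simp [coextMatrix, hi, hA1, ZMod.neg_eq_self_mod_two])
      (coextMatrix_col_new hf hsupp) fun e he he0 =>
        funext fun _ => coextMatrix_of_ne he0 fun h => hf (h ▸ hI he)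
  have hbij := bijOn_swap_insert_sdiff h0E hf
  have h0 : N₂.Indep {0} := by
    simp only [N₂, colMatroid_indep_iff, linearIndepOn_singleton_iff]
    refine ⟨by simp [h0E], fun h => ?_⟩
    simpa [coextMatrix, hA1] using congrFun h 1
  refine ⟨Equiv.swap 0 f, by simpa [hN.1, N₂] using hbij, fun I hI => ?_⟩
  rw [hN.1] at hI
  have hIimg : Equiv.swap 0 f '' I ⊆ ↑(insert f E) \ {0} := (hbij.mapsTo.mono_left hI).image_subset
  rw [hN.2, h0.contract_indep_iff, Set.union_singleton, Set.disjoint_singleton_right,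
    colMatroid_indep_iff, hcore I hI]
  have h0I : 0 ∉ Equiv.swap 0 f '' I := fun h => (hIimg h).2 rfl
  have hsub : insert 0 (Equiv.swap 0 f '' I) ⊆ ↑(insert f E) :=
    Set.insert_subset (by simp [h0E]) (hIimg.trans Set.sdiff_subset)
  simp only [hI, h0I, hsub, true_and, not_false_eq_true]
  rfl

end Coextension

namespace FrameTemplate

variable {B E Z : Finset ℕ}

lemma RespectsWith.builtFrom_support {F : Type} [Field F] {Φ : FrameTemplate F}
    {zcol : Set ℕ → (ℕ → F) → Prop} {A' A : ℕ → ℕ → F} (hA' : Φ.RespectsWith zcol B E Z A')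
    (hA : Φ.BuiltFrom Z A' A) {i j : ℕ} (hij : A i j ≠ 0) : i ∈ B ∧ j ∈ E := by
  obtain ⟨-, -, hZE, -, hsupp, -⟩ := hA'
  by_cases hjZ : j ∈ Z
  · obtain ⟨y, -, hy⟩ := hA.2 j hjZ
    refine ⟨?_, hZE hjZ⟩
    by_cases hj : A' i j = 0
    · exact (hsupp i y (by simpa [hy, hj] using hij)).1
    · exact (hsupp i j hj).1
  · exact hsupp i j (by rwa [← hA.1 j hjZ i])

lemma Respects.phiY1_frameColOn {A' A : ℕ → ℕ → ZMod 2} (hA' : PhiY1.Respects B E Z A')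
    (hA : PhiY1.BuiltFrom Z A' A) {j : ℕ} (hj : j ∈ E) (hjY : j ∉ PhiY1.Y1) :
    IsFrameColOn ⊥ (↑B \ {0}) (fun i => A i j) := by
  obtain ⟨hXB, -, -, -, -, -, -, hZunit, hframe, hΛ, hΔ⟩ := hA'
  have h1B : 1 ∈ B := hXB (by decide)
  have hX : (PhiY1.X : Set ℕ) = {0, 1} := by simp [PhiY1]
  by_cases hjZ : j ∈ Z
  · obtain ⟨y, hy, hAj⟩ := hA.2 j hjZ
    obtain ⟨b, ⟨hbB, hbX⟩, hb1, hb0⟩ := hZunit j hjZ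
    have hyΔ : ∀ i ∈ B, i ∉ PhiY1.X → A' i y = 0 := fun i hi hiX => by
      simpa [maskOn, FrameTemplate.CY, hy] using congrFun (AddSubgroup.mem_bot.1 (hΔ i hi hiX)) y
    rw [hX] at hbX hb0
    have hb01 : b ≠ 0 ∧ b ≠ 1 := by simpa [not_or] using hbX
    refine isFrameColOn_bot_of_support_pair ⟨hbB, by simpa using hb01.1⟩ ⟨h1B, by simp⟩ hb01.2
      (by simp [hAj, hb1, hyΔ b hbB (by simpa [PhiY1] using hb01)]) fun i hi hib hi1 => ?_
    have hi0 : i ≠ 0 := by simpa using hi.2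
    have hAi : A' i j = 0 := hb0 i ⟨hi.1, by simp [hi0, hi1]⟩ hib
    rw [hAj, hAi, hyΔ i hi.1 (by simp [PhiY1, hi0, hi1]), add_zero]
  · have hjCY : j ∉ PhiY1.CY := by simpa [PhiY1, FrameTemplate.CY] using hjY
    have h1 : A' 1 j = 0 := by
      simpa [maskOn, PhiY1] using congrFun (AddSubgroup.mem_bot.1 (hΛ j hj hjCY hjZ)) 1
    have hB : (↑B : Set ℕ) \ {0} = insert 1 (↑B \ ↑PhiY1.X) := by
      rw [hX]; ext i; by_cases hi : i = 1 <;> simp [hi, h1B]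
    rw [funext (hA.1 j hjZ), hB]
    exact (hframe j hj hjCY hjZ).insert h1

variable {M : Matroid α}

lemma Conforms.exists_frameMatrixExcept_phiY0 (h : Conforms M PhiY0) :
    ∃ (B E : Finset ℕ) (A : ℕ → ℕ → ZMod 2) (N : Matroid ℕ),
      1 ∉ B ∧ IsFrameMatrixExcept ⊥ B E 0 A ∧ IsColMatroidOf N E A ∧ MIso M N := by
  obtain ⟨B, E, A, N, ⟨-, h0E, -, -, hsupp, -, -, -, hframe, -, -⟩, hN, hM⟩ :=
    h.exists_respects rfl
  have hA : IsFrameMatrixExcept ⊥ B E 0 A := ⟨by simpa [PhiY0, FrameTemplate.CY] using h0E,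
    hsupp, fun j hj hj0 => by simpa [PhiY0] using hframe j hj (by simpa [PhiY0,
      FrameTemplate.CY] using hj0) (Finset.notMem_empty j)⟩
  obtain ⟨s, hs⟩ := Infinite.exists_notMem_finset B
  refine ⟨B.image (Equiv.swap 1 s).symm, E, _, N, ?_, hA.perm_rows _, hN.perm_rows _,
    by simpa [PhiY0] using hM⟩
  simpa [Equiv.swap_apply_eq_iff] using hs

lemma Conforms.vConforms_phiC_and_phiCX (h : Conforms M PhiY0) :
    VConforms M PhiC ∧ VConforms M PhiCX := by
  obtain ⟨B, E, A, N, h1B, hA, hN, hM⟩ := h.exists_frameMatrixExcept_phiY0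
  obtain ⟨f, hf⟩ := Infinite.exists_notMem_finset E
  have hM₂ := hM.trans (hN.miso_contract_coext hA h1B hf)
  have hA₂ := hA.coext h1B hf
  exact ⟨vConforms_phiC_of hA₂ (isColMatroidOf_colMatroid _ _) hM₂,
    vConforms_phiCX_of h1B hA₂.1 hA₂.2.1 (coextMatrix_one_zero h1B hA.2.1)
      (fun _ hj hj0 => hA.coext_frameColOn h1B hf hj hj0) (isColMatroidOf_colMatroid _ _) hM₂⟩

lemma Conforms.vConforms_phiX (h : Conforms M PhiY1) : VConforms M PhiX := by
  obtain ⟨B, E, Z, A', A, N, N₁, hA', hA, hN, hN₁, hM⟩ := h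
  have hE : E \ PhiY1.Y1 ⊆ E := Finset.sdiff_subset
  refine vConforms_phiX_of (hA'.1 (by decide)) (fun i j hij => ?_) (fun j hj => ?_)
    (hN.restrict hE) ?_
  · have hj : j ∈ E \ PhiY1.Y1 := by by_contra hj; simp [hj] at hij
    exact ⟨(hA'.builtFrom_support hA (by simpa [hj] using hij)).1, hj⟩
  · have hj' := Finset.mem_sdiff.1 hj
    simpa [hj] using hA'.phiY1_frameColOn hA hj'.1 hj'.2
  · rwa [hN₁.eq_contract, show (PhiY1.C : Set ℕ) = ∅ by simp [PhiY1], Matroid.contract_empty,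
      hN.1, ← Finset.coe_sdiff] at hM

end FrameTemplate

lemma wConforms_of_conforms_phiY0_or_phiY1 {Φ : FrameTemplate (ZMod 2)}
    (hΦ : Φ ∈ [PhiX, PhiC, PhiCX, PhiY0, PhiY1]) :
    (∀ M : Matroid α, Conforms M PhiY0 → WConforms M Φ) ∨
      (∀ M : Matroid α, Conforms M PhiY1 → WConforms M Φ) := by
  simp only [List.mem_cons, List.not_mem_nil, or_false] at hΦ
  rcases hΦ with rfl | rfl | rfl | rfl | rfl
  · exact .inr fun _ h => h.vConforms_phiX.wConforms
  · exact .inl fun _ h => h.vConforms_phiC_and_phiCX.1.wConforms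
  · exact .inl fun _ h => h.vConforms_phiC_and_phiCX.2.wConforms
  · exact .inl fun _ h => h.vConforms.wConforms
  · exact .inr fun _ h => h.vConforms.wConforms

theorem class_contains_phiY0_or_phiY1_general (𝓜 : Set (Matroid ℕ))
    (Φs Ψs : List (FrameTemplate (ZMod 2)))
    (hdesc : Describes 𝓜 Φs Ψs)
    (hnt : ∃ Φ ∈ Φs ++ Ψs, ¬ IsTrivialT Φ) :
    (∀ M : Matroid ℕ, Conforms M PhiY0 → M ∈ 𝓜) ∨
    (∀ M : Matroid ℕ, Conforms M PhiY1 → M ∈ 𝓜) ∨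
    (∀ M : Matroid ℕ, Conforms M PhiY0 → M✶ ∈ 𝓜) ∨
    (∀ M : Matroid ℕ, Conforms M PhiY1 → M✶ ∈ 𝓜) := by
  obtain ⟨Φ, hΦ, hnt⟩ := hnt
  obtain ⟨-, -, -, -, -, -, hΦs, hΨs, -, hclass⟩ := hdesc
  obtain ⟨Φ', hΦ', hle⟩ := (hclass Φ hΦ).resolve_left hnt
  rcases List.mem_append.1 hΦ with hΦ | hΨ <;>
    rcases wConforms_of_conforms_phiY0_or_phiY1 (α := ℕ) hΦ' with h | h
  · exact .inl fun M hM => hΦs Φ hΦ M (hle ℕ M (h M hM))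
  · exact .inr <| .inl fun M hM => hΦs Φ hΦ M (hle ℕ M (h M hM))
  · exact .inr <| .inr <| .inl fun M hM => hΨs Φ hΨ M (hle ℕ M (h M hM))
  · exact .inr <| .inr <| .inr fun M hM => hΨs Φ hΨ M (hle ℕ M (h M hM))

/-- If a set of binary frame templates describing a minor-closed class `𝓜`
of binary matroids contains a nontrivial template, then `𝓜` contains `𝓜(Φ_{Y₀})`,
`𝓜(Φ_{Y₁})`, `𝓜✶(Φ_{Y₀})`, or `𝓜✶(Φ_{Y₁})`. -/
theorem class_contains_phiY0_or_phiY1 (𝓜 : Set (Matroid ℕ))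
    (Φs Ψs : List (FrameTemplate (ZMod 2))) (hmc : MinorClosed 𝓜)
    (hbin : ∀ M ∈ 𝓜, M.E.Finite ∧ IsBinary M)
    (hT : ∀ Φ ∈ Φs ++ Ψs, IsBinaryT Φ)
    (hdesc : Describes 𝓜 Φs Ψs)
    (hnt : ∃ Φ ∈ Φs ++ Ψs, ¬ IsTrivialT Φ) :
    (∀ M : Matroid ℕ, Conforms M PhiY0 → M ∈ 𝓜) ∨
    (∀ M : Matroid ℕ, Conforms M PhiY1 → M ∈ 𝓜) ∨
    (∀ M : Matroid ℕ, Conforms M PhiY0 → M✶ ∈ 𝓜) ∨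
    (∀ M : Matroid ℕ, Conforms M PhiY1 → M✶ ∈ 𝓜) :=
  class_contains_phiY0_or_phiY1_general 𝓜 Φs Ψs hdesc hnt

end TemplatePaper
end

section
/- Every frame template Φ=(Γ,C,X,Y₀,Y₁,A₁,Δ,Λ) over a finite field is equivalent (Φ∼Φ', i.e., M_w(Φ)=M_w(Φ')) to a frame template Φ' in standard form. -/
open Matroid Set

namespace TemplatePaper

variable {α β γ : Type*}

/-! Elementary row operations on the `X`-rows are instances of operation (5) whose inverses
are again of that kind, so they do not change `𝓜_w(Φ)`. Gauss–Jordan elimination of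
`A₁[X, C]` by such operations reaches standard form: `X₀` is the set of pivot rows, `C₀`
the set of pivot columns, and every other row of `A₁[X, C]` has been cleared. -/

namespace FrameTemplate

variable {F : Type} [Field F]

lemma TEquiv.trans {Φ₁ Φ₂ Φ₃ : FrameTemplate F} (h₁₂ : TEquiv Φ₁ Φ₂) (h₂₃ : TEquiv Φ₂ Φ₃) :
    TEquiv Φ₁ Φ₃ := fun α M => (h₁₂ α M).trans (h₂₃ α M)

lemma tequiv_of_step_of_step {Φ Φ' : FrameTemplate F} (h : Step Φ Φ') (h' : Step Φ' Φ) :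
    TEquiv Φ Φ' := fun _ _ =>
  ⟨fun ⟨Ψ, hΨ, hM⟩ => ⟨Ψ, .head h' hΨ, hM⟩, fun ⟨Ψ, hΨ, hM⟩ => ⟨Ψ, .head h hΨ, hM⟩⟩

def RowEquiv (Φ Φ' : FrameTemplate F) : Prop :=
  TEquiv Φ Φ' ∧ Φ'.C = Φ.C ∧ Φ'.X = Φ.X

lemma RowEquiv.refl (Φ : FrameTemplate F) : RowEquiv Φ Φ :=
  ⟨fun _ _ => Iff.rfl, rfl, rfl⟩

lemma RowEquiv.trans {Φ₁ Φ₂ Φ₃ : FrameTemplate F} (h₁₂ : RowEquiv Φ₁ Φ₂)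
    (h₂₃ : RowEquiv Φ₂ Φ₃) : RowEquiv Φ₁ Φ₃ :=
  ⟨h₁₂.1.trans h₂₃.1, h₂₃.2.1.trans h₁₂.2.1, h₂₃.2.2.trans h₁₂.2.2⟩

lemma A1_eq_zero_of_notMem_X (Φ : FrameTemplate F) {i : ℕ} (hi : i ∉ Φ.X) (j : ℕ) :
    Φ.A1 i j = 0 :=
  by_contra fun h => hi (Φ.A1_supp i j h).1

def rowOp (Φ : FrameTemplate F) (e : (ℕ → F) →ₗ[F] (ℕ → F))
    (he : ∀ v, ∀ i ∉ Φ.X, e v i = v i) : FrameTemplate F where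
  Γ := Φ.Γ
  C := Φ.C
  X := Φ.X
  Y0 := Φ.Y0
  Y1 := Φ.Y1
  disj := Φ.disj
  A1 i j := e (fun i' => Φ.A1 i' j) i
  A1_supp i j h := by
    refine ⟨by_contra fun hi => h ?_, by_contra fun hj => h ?_⟩
    · rw [he _ i hi, Φ.A1_eq_zero_of_notMem_X hi]
    · have hcol : (fun i' => Φ.A1 i' j) = 0 :=
        funext fun i' => by_contra fun h' => hj (Φ.A1_supp i' j h').2
      rw [hcol, map_zero, Pi.zero_apply]
  Δ := Φ.Δ
  Δ_supp := Φ.Δ_supp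
  Δ_smul := Φ.Δ_smul
  Λ := Φ.Λ.map e.toAddMonoidHom
  Λ_supp := by
    rintro _ ⟨v, hv, rfl⟩ i hi
    exact (he v i hi).trans (Φ.Λ_supp v hv i hi)
  Λ_smul := by
    rintro γ hγ _ ⟨v, hv, rfl⟩
    exact ⟨(γ : F) • v, Φ.Λ_smul γ hγ v hv, e.map_smul _ v⟩

lemma coe_rowOp_Λ (Φ : FrameTemplate F) (e : (ℕ → F) →ₗ[F] (ℕ → F))
    (he : ∀ v, ∀ i ∉ Φ.X, e v i = v i) :
    ((Φ.rowOp e he).Λ : Set (ℕ → F)) = e '' Φ.Λ :=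
  AddSubgroup.coe_map _ _

lemma step_rowOp (Φ : FrameTemplate F) {e : (ℕ → F) →ₗ[F] (ℕ → F)}
    (he : ∀ v, ∀ i ∉ Φ.X, e v i = v i) (hop : ElemRowOp Φ.X e) : Step Φ (Φ.rowOp e he) :=
  .inr <| .inr <| .inr <| .inr <| .inl
    ⟨e, hop, rfl, rfl, rfl, rfl, rfl, rfl, rfl, Φ.coe_rowOp_Λ e he⟩

lemma step_rowOp_symm (Φ : FrameTemplate F) {e e' : (ℕ → F) →ₗ[F] (ℕ → F)}
    (he : ∀ v, ∀ i ∉ Φ.X, e v i = v i) (hop' : ElemRowOp Φ.X e') (hinv : ∀ v, e' (e v) = v) :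
    Step (Φ.rowOp e he) Φ := by
  refine .inr <| .inr <| .inr <| .inr <| .inl
    ⟨e', hop', rfl, rfl, rfl, rfl, rfl, ?_, rfl, ?_⟩
  · funext i j
    exact congrFun (hinv fun i' => Φ.A1 i' j).symm i
  · rw [coe_rowOp_Λ, ← Set.image_comp, show e' ∘ e = id from funext hinv, Set.image_id]

lemma rowEquiv_rowOp (Φ : FrameTemplate F) {e e' : (ℕ → F) →ₗ[F] (ℕ → F)}
    (he : ∀ v, ∀ i ∉ Φ.X, e v i = v i) (hop : ElemRowOp Φ.X e) (hop' : ElemRowOp Φ.X e')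
    (hinv : ∀ v, e' (e v) = v) : RowEquiv Φ (Φ.rowOp e he) :=
  ⟨tequiv_of_step_of_step (Φ.step_rowOp he hop) (Φ.step_rowOp_symm he hop' hinv), rfl, rfl⟩

def scaleRow (x : ℕ) (k : F) : (ℕ → F) →ₗ[F] (ℕ → F) where
  toFun v i := if i = x then k * v i else v i
  map_add' v w := by ext i; by_cases h : i = x <;> simp [h, mul_add]
  map_smul' c v := by ext i; by_cases h : i = x <;> simp [h, mul_left_comm]

def addRow (x₁ x₂ : ℕ) (k : F) : (ℕ → F) →ₗ[F] (ℕ → F) where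
  toFun v i := if i = x₂ then v i + k * v x₁ else v i
  map_add' v w := by ext i; by_cases h : i = x₂ <;> simp [h, mul_add, add_add_add_comm]
  map_smul' c v := by ext i; by_cases h : i = x₂ <;> simp [h, mul_add, mul_left_comm]

lemma exists_rowEquiv_scaleRow (Φ : FrameTemplate F) {x : ℕ} (hx : x ∈ Φ.X) {k : F}
    (hk : k ≠ 0) : ∃ Φ', RowEquiv Φ Φ' ∧
      ∀ i j, Φ'.A1 i j = if i = x then k * Φ.A1 i j else Φ.A1 i j := by
  have he : ∀ v, ∀ i ∉ Φ.X, scaleRow x k v i = v i := fun _ _ hi =>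
    if_neg (by rintro rfl; exact hi hx)
  refine ⟨Φ.rowOp (scaleRow x k) he, Φ.rowEquiv_rowOp (e' := scaleRow x k⁻¹) he
    (.inr <| .inl ⟨x, hx, k, hk, rfl⟩)
    (.inr <| .inl ⟨x, hx, k⁻¹, inv_ne_zero hk, rfl⟩) fun v => ?_, fun _ _ => rfl⟩
  ext i
  by_cases hi : i = x <;> simp [scaleRow, hi, hk]

lemma exists_rowEquiv_addRow (Φ : FrameTemplate F) {x₁ x₂ : ℕ} (hx₁ : x₁ ∈ Φ.X)
    (hx₂ : x₂ ∈ Φ.X) (hne : x₁ ≠ x₂) (k : F) : ∃ Φ', RowEquiv Φ Φ' ∧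
      ∀ i j, Φ'.A1 i j = if i = x₂ then Φ.A1 i j + k * Φ.A1 x₁ j else Φ.A1 i j := by
  have he : ∀ v, ∀ i ∉ Φ.X, addRow x₁ x₂ k v i = v i := fun _ _ hi =>
    if_neg (by rintro rfl; exact hi hx₂)
  refine ⟨Φ.rowOp (addRow x₁ x₂ k) he, Φ.rowEquiv_rowOp (e' := addRow x₁ x₂ (-k)) he
    (.inr <| .inr ⟨x₁, hx₁, x₂, hx₂, hne, k, rfl⟩)
    (.inr <| .inr ⟨x₁, hx₁, x₂, hx₂, hne, -k, rfl⟩) fun v => ?_, fun _ _ => rfl⟩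
  ext i
  by_cases hi : i = x₂ <;> simp [addRow, hi, hne]

lemma exists_rowEquiv_addRows (Φ : FrameTemplate F) {x : ℕ} (hx : x ∈ Φ.X) (t : ℕ → F)
    (T : Finset ℕ) (hT : T ⊆ Φ.X) (hxT : x ∉ T) : ∃ Φ', RowEquiv Φ Φ' ∧
      ∀ i j, Φ'.A1 i j = if i ∈ T then Φ.A1 i j + t i * Φ.A1 x j else Φ.A1 i j := by
  induction T using Finset.induction_on with
  | empty => exact ⟨Φ, .refl Φ, by simp⟩
  | @insert a T haT ih =>
    rw [Finset.insert_subset_iff] at hT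
    rw [Finset.mem_insert, not_or] at hxT
    obtain ⟨Φ₁, h₁, hA₁⟩ := ih hT.2 hxT.2
    obtain ⟨Φ₂, h₂, hA₂⟩ := Φ₁.exists_rowEquiv_addRow (h₁.2.2 ▸ hx) (h₁.2.2 ▸ hT.1)
      hxT.1 (t a)
    refine ⟨Φ₂, h₁.trans h₂, fun i j => ?_⟩
    simp only [hA₂, hA₁, if_neg hxT.2, Finset.mem_insert]
    by_cases hia : i = a
    · simp [hia, haT]
    · simp [hia]

lemma exists_rowEquiv_pivot (Φ : FrameTemplate F) {x c : ℕ} (hx : x ∈ Φ.X)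
    (hxc : Φ.A1 x c ≠ 0) : ∃ Φ', RowEquiv Φ Φ' ∧ ∀ i j, Φ'.A1 i j =
      if i = x then Φ.A1 x j / Φ.A1 x c else Φ.A1 i j - Φ.A1 i c * Φ.A1 x j / Φ.A1 x c := by
  obtain ⟨Φ₁, h₁, hA₁⟩ := Φ.exists_rowEquiv_scaleRow hx (inv_ne_zero hxc)
  obtain ⟨Φ₂, h₂, hA₂⟩ := Φ₁.exists_rowEquiv_addRows (h₁.2.2 ▸ hx) (fun i => -Φ.A1 i c)
    (Φ.X.erase x) (h₁.2.2 ▸ Φ.X.erase_subset x) (Φ.X.notMem_erase x)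
  refine ⟨Φ₂, h₁.trans h₂, fun i j => ?_⟩
  rw [hA₂, hA₁, hA₁, if_pos rfl]
  simp only [Finset.mem_erase]
  by_cases hix : i = x
  · simp [hix, div_eq_inv_mul]
  by_cases hiX : i ∈ Φ.X
  · simp [hix, hiX]
    ring
  · simp [hix, hiX, Φ.A1_eq_zero_of_notMem_X hiX]

def IsPivoted (Φ : FrameTemplate F) (X0 : Finset ℕ) (g : ℕ → ℕ) : Prop :=
  X0 ⊆ Φ.X ∧ Set.InjOn g X0 ∧ ∀ x ∈ X0, g x ∈ Φ.C ∧ ∀ i, Φ.A1 i (g x) = if i = x then 1 else 0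

lemma standardForm_of_isPivoted {Φ : FrameTemplate F} {X0 : Finset ℕ} {g : ℕ → ℕ}
    (hΦ : Φ.IsPivoted X0 g) (hrest : ∀ x ∈ Φ.X \ X0, ∀ c ∈ Φ.C, Φ.A1 x c = 0) :
    StandardForm Φ := by
  obtain ⟨hX0, hinj, hg⟩ := hΦ
  have hC0 : X0.image g ⊆ Φ.C := Finset.image_subset_iff.mpr fun x hx => (hg x hx).1
  refine ⟨X0.image g, Φ.C \ X0.image g, X0, Φ.X \ X0,
    (Finset.union_sdiff_of_subset hC0).symm, Finset.disjoint_sdiff,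
    (Finset.union_sdiff_of_subset hX0).symm, Finset.disjoint_sdiff,
    ⟨g, by simpa using hinj.bijOn_image, ?_⟩, hrest⟩
  simp only [Finset.mem_image]
  rintro x hx _ ⟨x', hx', rfl⟩
  rw [(hg x' hx').2]
  exact if_congr (hinj.eq_iff hx hx').symm rfl rfl

lemma exists_rowEquiv_isPivoted_insert {Φ : FrameTemplate F} {X0 : Finset ℕ} {g : ℕ → ℕ}
    (hΦ : Φ.IsPivoted X0 g) {x c : ℕ} (hx : x ∈ Φ.X \ X0) (hc : c ∈ Φ.C)
    (hxc : Φ.A1 x c ≠ 0) :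
    ∃ Φ', RowEquiv Φ Φ' ∧ Φ'.IsPivoted (insert x X0) (Function.update g x c) := by
  obtain ⟨hX0, hinj, hg⟩ := hΦ
  obtain ⟨hxX, hxX0⟩ := Finset.mem_sdiff.mp hx
  obtain ⟨Φ', h, hA⟩ := Φ.exists_rowEquiv_pivot hxX hxc
  have hne : ∀ x' ∈ X0, x' ≠ x := fun x' hx' => ne_of_mem_of_not_mem hx' hxX0
  have hrow : ∀ x' ∈ X0, Φ.A1 x (g x') = 0 := fun x' hx' => by
    rw [(hg x' hx').2, if_neg (hne x' hx').symm]
  have hupdate : Set.EqOn (Function.update g x c) g X0 := fun x' hx' =>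
    Function.update_of_ne (hne x' hx') _ _
  refine ⟨Φ', h, h.2.2 ▸ Finset.insert_subset hxX hX0, ?_, fun x' hx' => ?_⟩
  · rw [Finset.coe_insert, Set.injOn_insert (by simpa using hxX0), hupdate.image_eq,
      Function.update_self]
    refine ⟨hinj.congr hupdate.symm, ?_⟩
    rintro ⟨x', hx', hgx'⟩
    exact hxc (hgx' ▸ hrow x' hx')
  rcases Finset.mem_insert.mp hx' with rfl | hx'
  · refine ⟨by simpa [h.2.1] using hc, fun i => ?_⟩
    rw [Function.update_self, hA]
    by_cases hi : i = x' <;> simp [hi, hxc]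
  · refine ⟨by simpa [hupdate hx', h.2.1] using (hg x' hx').1, fun i => ?_⟩
    rw [hupdate hx', hA]
    by_cases hi : i = x <;> simp [hi, hrow x' hx', (hg x' hx').2, (hne x' hx').symm]

lemma exists_tequiv_standardForm_of_isPivoted {Φ : FrameTemplate F} {X0 : Finset ℕ}
    {g : ℕ → ℕ} (hΦ : Φ.IsPivoted X0 g) : ∃ Φ', TEquiv Φ Φ' ∧ StandardForm Φ' := by
  induction hn : (Φ.X \ X0).card using Nat.strong_induction_on generalizing Φ X0 g with
  | _ n ih =>
  by_cases hrest : ∀ x ∈ Φ.X \ X0, ∀ c ∈ Φ.C, Φ.A1 x c = 0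
  · exact ⟨Φ, fun _ _ => Iff.rfl, standardForm_of_isPivoted hΦ hrest⟩
  push Not at hrest
  obtain ⟨x, hx, c, hc, hxc⟩ := hrest
  obtain ⟨Φ', h, hΦ'⟩ := exists_rowEquiv_isPivoted_insert hΦ hx hc hxc
  have hlt : (Φ'.X \ insert x X0).card < n := by
    rw [h.2.2, Finset.sdiff_insert, ← hn]
    exact Finset.card_erase_lt_of_mem hx
  obtain ⟨Φ'', h', hsf⟩ := ih _ hlt hΦ' rfl
  exact ⟨Φ'', h.1.trans h', hsf⟩

end FrameTemplate

open FrameTemplate in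
theorem equivalent_to_standard_form_general {F : Type} [Field F]
    (Φ : FrameTemplate F) :
    ∃ Φ' : FrameTemplate F, TEquiv Φ Φ' ∧ StandardForm Φ' :=
  exists_tequiv_standardForm_of_isPivoted (g := id) ⟨Finset.empty_subset _, by simp, by simp⟩

open FrameTemplate in
/-- Every frame template over a finite field is equivalent to a frame
template in standard form. -/
theorem equivalent_to_standard_form {F : Type} [Field F] [Fintype F]
    (Φ : FrameTemplate F) :
    ∃ Φ' : FrameTemplate F, TEquiv Φ Φ' ∧ StandardForm Φ' :=
  equivalent_to_standard_form_general Φ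

end TemplatePaper
end
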